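/- arXiv:2206.13096 — 5 statements merged into one kernel-verified Lean document; each statement's English description precedes it below -/
import Mathlib

section
/- The vertex set of the standard n-cube {−1,1}^n ⊂ ℝ^n (n ≥ 2), with the Euclidean metric, is 3-point homogeneous: for any two triples (A_0,A_1,A_2) and (A'_0,A'_1,A'_2) of vertices with ‖A_i − A_j‖ = ‖A'_i − A'_j‖ for all i,j, there is an isometry of the cube's vertex set (a self-bijection of {−1,1}^n preserving all pairwise Euclidean distances) mapping A_i to A'_i for i = 0,1,2. -/
/-!
Coordinatewise multiplication by a vertex `a` is an isometry of the cube taking `a` to the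
all-ones vector, so we may assume `A 0 = A' 0 = 𝟙`. A coordinate `i` is then described by its
pattern `(A 1 i, A 2 i) ∈ {±1}²`, and a permutation of coordinates carries `A` to `A'` as soon as
every pattern occurs equally often in both triples. Every function of `(s, t) ∈ {±1}²` is a
combination of `1, s, t, st`, so these counts are determined by `n`, `∑ A 1 i`, `∑ A 2 i` and
`∑ A 1 i * A 2 i`, i.e. by inner products, which for cube vertices equal `n - dist² / 2`.
-/

/-- The vertex set of the standard `n`-cube `{−1,1}ⁿ`. -/
def cubeVertices (n : ℕ) : Set (EuclideanSpace ℝ (Fin n)) :=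
  {x | ∀ i, x i = 1 ∨ x i = -1}

open Finset RealInnerProductSpace

section SignVectors

variable {ι : Type*} [Fintype ι]

lemma four_mul_eq_multilinear_of_sign (g : ℝ → ℝ → ℝ) {s t : ℝ} (hs : s = 1 ∨ s = -1)
    (ht : t = 1 ∨ t = -1) :
    4 * g s t = (g 1 1 + g 1 (-1) + g (-1) 1 + g (-1) (-1))
      + s * (g 1 1 + g 1 (-1) - g (-1) 1 - g (-1) (-1))
      + t * (g 1 1 - g 1 (-1) + g (-1) 1 - g (-1) (-1))
      + s * t * (g 1 1 - g 1 (-1) - g (-1) 1 + g (-1) (-1)) := by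
  rcases hs with rfl | rfl <;> rcases ht with rfl | rfl <;> ring

lemma sum_comp_eq_of_sum_eq {u v u' v' : ι → ℝ}
    (hu : ∀ i, u i = 1 ∨ u i = -1) (hv : ∀ i, v i = 1 ∨ v i = -1)
    (hu' : ∀ i, u' i = 1 ∨ u' i = -1) (hv' : ∀ i, v' i = 1 ∨ v' i = -1)
    (hsu : ∑ i, u i = ∑ i, u' i) (hsv : ∑ i, v i = ∑ i, v' i)
    (hsuv : ∑ i, u i * v i = ∑ i, u' i * v' i) (g : ℝ → ℝ → ℝ) :
    ∑ i, g (u i) (v i) = ∑ i, g (u' i) (v' i) := by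
  have expand : ∀ u v : ι → ℝ, (∀ i, u i = 1 ∨ u i = -1) → (∀ i, v i = 1 ∨ v i = -1) →
      4 * ∑ i, g (u i) (v i) = Fintype.card ι * (g 1 1 + g 1 (-1) + g (-1) 1 + g (-1) (-1))
        + (∑ i, u i) * (g 1 1 + g 1 (-1) - g (-1) 1 - g (-1) (-1))
        + (∑ i, v i) * (g 1 1 - g 1 (-1) + g (-1) 1 - g (-1) (-1))
        + (∑ i, u i * v i) * (g 1 1 - g 1 (-1) - g (-1) 1 + g (-1) (-1)) := by
    intro u v hu hv
    simp only [mul_sum, four_mul_eq_multilinear_of_sign g (hu _) (hv _), sum_add_distrib, sum_mul]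
    simp [mul_add]
  have h := expand u v hu hv
  rw [hsu, hsv, hsuv, ← expand u' v' hu' hv'] at h
  linarith

lemma exists_perm_of_card_fiber_eq {α : Type*} [DecidableEq α] (c c' : ι → α)
    (h : ∀ a, #{i | c i = a} = #{i | c' i = a}) :
    ∃ σ : Equiv.Perm ι, ∀ i, c (σ i) = c' i :=
  ⟨Equiv.ofFiberEquiv fun a => Fintype.equivOfCardEq <| by
    rw [Fintype.card_subtype, Fintype.card_subtype, h], Equiv.ofFiberEquiv_map _⟩

lemma exists_perm_of_sum_eq {u v u' v' : ι → ℝ}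
    (hu : ∀ i, u i = 1 ∨ u i = -1) (hv : ∀ i, v i = 1 ∨ v i = -1)
    (hu' : ∀ i, u' i = 1 ∨ u' i = -1) (hv' : ∀ i, v' i = 1 ∨ v' i = -1)
    (hsu : ∑ i, u i = ∑ i, u' i) (hsv : ∑ i, v i = ∑ i, v' i)
    (hsuv : ∑ i, u i * v i = ∑ i, u' i * v' i) :
    ∃ σ : Equiv.Perm ι, ∀ i, u (σ i) = u' i ∧ v (σ i) = v' i := by
  classical
  obtain ⟨σ, hσ⟩ := exists_perm_of_card_fiber_eq (fun i => (u i, v i)) (fun i => (u' i, v' i))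
    fun p => by
      have := sum_comp_eq_of_sum_eq hu hv hu' hv' hsu hsv hsuv
        fun s t => if (s, t) = p then 1 else 0
      simp only [card_filter]
      exact_mod_cast this
  exact ⟨σ, fun i => Prod.ext_iff.1 (hσ i)⟩

lemma real_inner_eq_sum_mul (x y : EuclideanSpace ℝ ι) : ⟪x, y⟫ = ∑ i, x i * y i := by
  simp [PiLp.inner_apply, mul_comm]

end SignVectors

section Cube

variable {n : ℕ}

lemma mul_self_eq_one_of_mem_cubeVertices {x : EuclideanSpace ℝ (Fin n)}
    (hx : x ∈ cubeVertices n) (i : Fin n) : x i * x i = 1 := by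
  rcases hx i with h | h <;> simp [h]

lemma inner_eq_of_mem_cubeVertices {x y : EuclideanSpace ℝ (Fin n)}
    (hx : x ∈ cubeVertices n) (hy : y ∈ cubeVertices n) :
    ⟪x, y⟫ = n - dist x y ^ 2 / 2 := by
  have norm_sq : ∀ z ∈ cubeVertices n, ‖z‖ ^ 2 = n := fun z hz => by
    rw [EuclideanSpace.real_norm_sq_eq]
    simp [sq, mul_self_eq_one_of_mem_cubeVertices hz]
  rw [dist_eq_norm, norm_sub_sq_real, norm_sq x hx, norm_sq y hy]
  ring

noncomputable def signChange (a : EuclideanSpace ℝ (Fin n)) (ha : a ∈ cubeVertices n) :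
    EuclideanSpace ℝ (Fin n) ≃ₗᵢ[ℝ] EuclideanSpace ℝ (Fin n) :=
  LinearIsometryEquiv.piLpCongrRight 2 fun i =>
    Unitary.mulLeft ℝ ℝ ⟨a i, Unitary.mem_iff.2 <| by
      simp [mul_self_eq_one_of_mem_cubeVertices ha i]⟩

section SignChange

variable {a : EuclideanSpace ℝ (Fin n)} (ha : a ∈ cubeVertices n)

@[simp]
lemma signChange_apply (x : EuclideanSpace ℝ (Fin n)) (i : Fin n) :
    signChange a ha x i = a i * x i := rfl

lemma signChange_self_apply (i : Fin n) : signChange a ha a i = 1 :=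
  mul_self_eq_one_of_mem_cubeVertices ha i

lemma sum_signChange_apply (x : EuclideanSpace ℝ (Fin n)) :
    ∑ i, signChange a ha x i = ⟪a, x⟫ := by
  simp [real_inner_eq_sum_mul]

lemma signChange_mem_cubeVertices_iff {x : EuclideanSpace ℝ (Fin n)} :
    signChange a ha x ∈ cubeVertices n ↔ x ∈ cubeVertices n := by
  refine forall_congr' fun i => ?_
  rcases ha i with h | h <;> simp [h, neg_eq_iff_eq_neg, or_comm]

end SignChange

lemma piLpCongrLeft_mem_cubeVertices_iff (σ : Equiv.Perm (Fin n))
    {x : EuclideanSpace ℝ (Fin n)} :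
    LinearIsometryEquiv.piLpCongrLeft 2 ℝ ℝ σ x ∈ cubeVertices n ↔ x ∈ cubeVertices n := by
  simp only [cubeVertices, Set.mem_ofPred_eq, LinearIsometryEquiv.piLpCongrLeft_apply,
    Equiv.piCongrLeft'_apply]
  exact σ.symm.forall_congr_right (q := fun j => x j = 1 ∨ x j = -1)

end Cube

theorem stmt9_general (n : ℕ)
    (A A' : Fin 3 → EuclideanSpace ℝ (Fin n))
    (hA : ∀ k, A k ∈ cubeVertices n) (hA' : ∀ k, A' k ∈ cubeVertices n)
    (hd : ∀ k l, dist (A k) (A l) = dist (A' k) (A' l)) :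
    ∃ f : EuclideanSpace ℝ (Fin n) → EuclideanSpace ℝ (Fin n),
      Set.BijOn f (cubeVertices n) (cubeVertices n) ∧
      (∀ x ∈ cubeVertices n, ∀ y ∈ cubeVertices n, dist (f x) (f y) = dist x y) ∧
      ∀ k, f (A k) = A' k := by
  have hinner : ∀ k l, ⟪A k, A l⟫ = ⟪A' k, A' l⟫ := fun k l => by
    rw [inner_eq_of_mem_cubeVertices (hA k) (hA l), inner_eq_of_mem_cubeVertices (hA' k) (hA' l),
      hd]
  set e := signChange (A 0) (hA 0)
  set e' := signChange (A' 0) (hA' 0)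
  have he : ∀ k, e (A k) ∈ cubeVertices n :=
    fun k => (signChange_mem_cubeVertices_iff _).2 (hA k)
  have he' : ∀ k, e' (A' k) ∈ cubeVertices n :=
    fun k => (signChange_mem_cubeVertices_iff _).2 (hA' k)
  obtain ⟨σ, hσ⟩ := exists_perm_of_sum_eq (he 1) (he 2) (he' 1) (he' 2)
    (by simp only [e, e', sum_signChange_apply, hinner])
    (by simp only [e, e', sum_signChange_apply, hinner])
    (by simp only [← real_inner_eq_sum_mul, LinearIsometryEquiv.inner_map_map, hinner])
  let f := e.trans ((LinearIsometryEquiv.piLpCongrLeft 2 ℝ ℝ σ.symm).trans e'.symm)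
  have hf : ∀ x, f x ∈ cubeVertices n ↔ x ∈ cubeVertices n := fun x => by
    simp only [f, LinearIsometryEquiv.trans_apply]
    rw [← signChange_mem_cubeVertices_iff (hA' 0), LinearIsometryEquiv.apply_symm_apply,
      piLpCongrLeft_mem_cubeVertices_iff, signChange_mem_cubeVertices_iff]
  refine ⟨f, f.toEquiv.bijOn hf, fun x _ y _ => f.dist_map x y, fun k => ?_⟩
  suffices LinearIsometryEquiv.piLpCongrLeft 2 ℝ ℝ σ.symm (e (A k)) = e' (A' k) by
    simp [f, this]
  ext i
  fin_cases k
  · exact (signChange_self_apply (hA 0) _).trans (signChange_self_apply (hA' 0) _).symm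
  · simp [(hσ i).1]
  · simp [(hσ i).2]

/-- The vertex set of the standard `n`-cube, `n ≥ 2`, is 3-point homogeneous. -/
theorem stmt9 (n : ℕ) (hn : 2 ≤ n)
    (A A' : Fin 3 → EuclideanSpace ℝ (Fin n))
    (hA : ∀ k, A k ∈ cubeVertices n) (hA' : ∀ k, A' k ∈ cubeVertices n)
    (hd : ∀ k l, dist (A k) (A l) = dist (A' k) (A' l)) :
    ∃ f : EuclideanSpace ℝ (Fin n) → EuclideanSpace ℝ (Fin n),
      Set.BijOn f (cubeVertices n) (cubeVertices n) ∧
      (∀ x ∈ cubeVertices n, ∀ y ∈ cubeVertices n, dist (f x) (f y) = dist x y) ∧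
      ∀ k, f (A k) = A' k :=
  stmt9_general n A A' hA hA' hd
end

section
/- For n = 4, every distance-preserving bijection of the vertex set {−1,1}^4 of the 4-cube that fixes the three vertices (1,1,1,1), (−1,−1,1,1), and (−1,1,−1,1) is the identity map. -/
/-!
Every vertex of `{−1,1}⁴` has norm `2`, so a self-isometry `f` of the vertex set preserves inner
products with its fixed vertices. The fixed vertices `(1,1,1,1)`, `(−1,−1,1,1)`, `(−1,1,−1,1)`
only confine `f x` to the line `x + ℝ (1,−1,−1,1)`; for `w = (1,−1,1,1)` this line meets the cube
in `w` alone, so `w` is fixed as well. The four fixed vertices span `ℝ⁴`, hence `f x = x`.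
-/

open scoped RealInnerProductSpace

local notation "ℝ⁴" => EuclideanSpace ℝ (Fin 4)

def cubeVertices4 : Set (EuclideanSpace ℝ (Fin 4)) :=
  {x | ∀ i, x i = 1 ∨ x i = -1}

theorem EuclideanSpace.norm_sq_eq_card_of_forall_eq_one_or_neg_one {ι : Type*} [Fintype ι]
    {x : EuclideanSpace ℝ ι} (hx : ∀ i, x i = 1 ∨ x i = -1) : ‖x‖ ^ 2 = Fintype.card ι := by
  have hsq : ∀ i, x i ^ 2 = 1 := fun i => by rcases hx i with h | h <;> simp [h]
  simp [EuclideanSpace.real_norm_sq_eq, hsq]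

theorem real_inner_eq_of_dist_eq_of_norm_eq {E : Type*} [NormedAddCommGroup E]
    [InnerProductSpace ℝ E] {x y x' y' : E} (hx : ‖x'‖ = ‖x‖) (hy : ‖y'‖ = ‖y‖)
    (h : dist x' y' = dist x y) : ⟪x', y'⟫ = ⟪x, y⟫ := by
  have h' := congrArg (· ^ 2) h
  simp only [dist_eq_norm, norm_sub_sq_real, hx, hy] at h'
  linarith

theorem inner_apply_eq_of_apply_eq_self {f : ℝ⁴ → ℝ⁴}
    (hmaps : Set.MapsTo f cubeVertices4 cubeVertices4)
    (hiso : ∀ x ∈ cubeVertices4, ∀ y ∈ cubeVertices4, dist (f x) (f y) = dist x y)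
    {a : ℝ⁴} (ha : a ∈ cubeVertices4) (hfa : f a = a) {x : ℝ⁴} (hx : x ∈ cubeVertices4) :
    ⟪f x, a⟫ = ⟪x, a⟫ := by
  have hnorm : ‖f x‖ = ‖x‖ := by
    rw [← sq_eq_sq₀ (norm_nonneg _) (norm_nonneg _),
      EuclideanSpace.norm_sq_eq_card_of_forall_eq_one_or_neg_one (hmaps hx),
      EuclideanSpace.norm_sq_eq_card_of_forall_eq_one_or_neg_one hx]
  have hdist := hiso x hx a ha
  rw [hfa] at hdist
  exact real_inner_eq_of_dist_eq_of_norm_eq hnorm rfl hdist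

theorem eq_of_mem_cubeVertices4_of_inner_eq {z : ℝ⁴} (hz : z ∈ cubeVertices4)
    (h₀ : ⟪z, WithLp.toLp 2 fun _ => 1⟫ = ⟪(!₂[1, -1, 1, 1] : ℝ⁴), WithLp.toLp 2 fun _ => 1⟫)
    (h₁ : ⟪z, (!₂[-1, -1, 1, 1] : ℝ⁴)⟫ = ⟪(!₂[1, -1, 1, 1] : ℝ⁴), (!₂[-1, -1, 1, 1] : ℝ⁴)⟫)
    (h₂ : ⟪z, (!₂[-1, 1, -1, 1] : ℝ⁴)⟫ = ⟪(!₂[1, -1, 1, 1] : ℝ⁴), (!₂[-1, 1, -1, 1] : ℝ⁴)⟫) :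
    z = (!₂[1, -1, 1, 1] : ℝ⁴) := by
  simp only [PiLp.inner_apply, RCLike.inner_apply, Real.ringHom_apply, Fin.sum_univ_four,
    Matrix.cons_val] at h₀ h₁ h₂
  have hle : ∀ i, z i ≤ 1 := fun i => by rcases hz i with h | h <;> linarith
  have := hle 2; have := hle 3
  ext i
  fin_cases i <;>
    simp only [Fin.isValue, Fin.zero_eta, Fin.mk_one, Fin.reduceFinMk, Matrix.cons_val] <;> linarith

theorem eq_of_inner_eq_four_vertices {x y : ℝ⁴}
    (h₀ : ⟪x, WithLp.toLp 2 fun _ => 1⟫ = ⟪y, WithLp.toLp 2 fun _ => 1⟫)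
    (h₁ : ⟪x, (!₂[-1, -1, 1, 1] : ℝ⁴)⟫ = ⟪y, (!₂[-1, -1, 1, 1] : ℝ⁴)⟫)
    (h₂ : ⟪x, (!₂[-1, 1, -1, 1] : ℝ⁴)⟫ = ⟪y, (!₂[-1, 1, -1, 1] : ℝ⁴)⟫)
    (h₃ : ⟪x, (!₂[1, -1, 1, 1] : ℝ⁴)⟫ = ⟪y, (!₂[1, -1, 1, 1] : ℝ⁴)⟫) : x = y := by
  simp only [PiLp.inner_apply, RCLike.inner_apply, Real.ringHom_apply, Fin.sum_univ_four,
    Matrix.cons_val] at h₀ h₁ h₂ h₃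
  ext i
  fin_cases i <;> simp only [Fin.isValue, Fin.zero_eta, Fin.mk_one, Fin.reduceFinMk] <;> linarith

/-- Every self-isometry of the vertex set of the `4`-cube fixing the vertices
`(1,1,1,1)`, `(−1,−1,1,1)` and `(−1,1,−1,1)` is the identity. -/
theorem stmt11 (f : EuclideanSpace ℝ (Fin 4) → EuclideanSpace ℝ (Fin 4))
    (hbij : Set.BijOn f cubeVertices4 cubeVertices4)
    (hiso : ∀ x ∈ cubeVertices4, ∀ y ∈ cubeVertices4, dist (f x) (f y) = dist x y)
    (h1 : f (WithLp.toLp 2 (fun _ => 1) : EuclideanSpace ℝ (Fin 4)) = WithLp.toLp 2 (fun _ => 1))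
    (h2 : f (WithLp.toLp 2 ![-1, -1, 1, 1] : EuclideanSpace ℝ (Fin 4)) = WithLp.toLp 2 ![-1, -1, 1, 1])
    (h3 : f (WithLp.toLp 2 ![-1, 1, -1, 1] : EuclideanSpace ℝ (Fin 4)) = WithLp.toLp 2 ![-1, 1, -1, 1]) :
    ∀ x ∈ cubeVertices4, f x = x := by
  have hinner : ∀ {a}, a ∈ cubeVertices4 → f a = a →
      ∀ {x}, x ∈ cubeVertices4 → ⟪f x, a⟫ = ⟪x, a⟫ :=
    inner_apply_eq_of_apply_eq_self hbij.mapsTo hiso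
  have hv₀ : (WithLp.toLp 2 fun _ => 1 : ℝ⁴) ∈ cubeVertices4 := fun _ => Or.inl rfl
  have hv₁ : (!₂[-1, -1, 1, 1] : ℝ⁴) ∈ cubeVertices4 := by intro i; fin_cases i <;> norm_num
  have hv₂ : (!₂[-1, 1, -1, 1] : ℝ⁴) ∈ cubeVertices4 := by intro i; fin_cases i <;> norm_num
  have hw : (!₂[1, -1, 1, 1] : ℝ⁴) ∈ cubeVertices4 := by intro i; fin_cases i <;> norm_num
  have hfw : f (!₂[1, -1, 1, 1] : ℝ⁴) = (!₂[1, -1, 1, 1] : ℝ⁴) :=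
    eq_of_mem_cubeVertices4_of_inner_eq (hbij.mapsTo hw)
      (hinner hv₀ h1 hw) (hinner hv₁ h2 hw) (hinner hv₂ h3 hw)
  intro x hx
  exact eq_of_inner_eq_four_vertices
    (hinner hv₀ h1 hx) (hinner hv₁ h2 hx) (hinner hv₂ h3 hx) (hinner hw hfw hx)
end

section
/- The vertex set of the n-orthoplex, consisting of the 2n points ±e_1,...,±e_n in ℝ^n (where e_i are the standard basis vectors), is 2n-point homogeneous: any bijection between two subsets of the vertex set that preserves pairwise Euclidean distances extends to a self-isometry of the whole vertex set. -/
/-- The vertex set of the `n`-orthoplex: the `2n` points `±e₁, …, ±eₙ`. -/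
def orthoplexVertices (n : ℕ) : Set (EuclideanSpace ℝ (Fin n)) :=
  {x | ∃ i : Fin n, x = EuclideanSpace.single i 1 ∨ x = -EuclideanSpace.single i 1}

/-!
The vertices are the vectors `single i a` with `|a| = 1`. Being unit vectors, their pairwise
distances determine their inner products, and `⟪single i a, single j b⟫` is `a * b` or `0`
according as `i = j` or not. Hence a distance-preserving `f` on `S` sends each coordinate axis
met by `S` into one coordinate axis, multiplying by one sign per axis, and sends distinct axes
to distinct axes. Extending this partial injection of indices to a permutation gives a signed
permutation of coordinates: a linear isometry of `ℝⁿ` that permutes the vertices and agrees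
with `f` on `S`.
-/

open EuclideanSpace Set

lemma inner_eq_inner_of_dist_eq {F : Type*} [NormedAddCommGroup F] [InnerProductSpace ℝ F]
    {x y x' y' : F} (hx : ‖x‖ = ‖x'‖) (hy : ‖y‖ = ‖y'‖) (h : dist x y = dist x' y') :
    inner ℝ x y = inner ℝ x' y' := by
  have h2 := congrArg (· ^ 2) h
  simp only [dist_eq_norm, norm_sub_sq_real, hx, hy] at h2
  linarith

section SignedPerm

variable {ι : Type*} [Fintype ι]

/-- The signed permutation `x ↦ (ε (π⁻¹ j) * x (π⁻¹ j))_j`. -/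
noncomputable def signedPerm (π : Equiv.Perm ι) (ε : ι → ℝ) (x : EuclideanSpace ℝ ι) :
    EuclideanSpace ℝ ι :=
  LinearIsometryEquiv.piLpCongrLeft 2 ℝ ℝ π (WithLp.toLp 2 fun i => ε i * x i)

lemma isometry_signedPerm (π : Equiv.Perm ι) {ε : ι → ℝ} (hε : ∀ i, |ε i| = 1) :
    Isometry (signedPerm π ε) := by
  refine Isometry.of_dist_eq fun x y => ?_
  rw [signedPerm, signedPerm, LinearIsometryEquiv.dist_map, EuclideanSpace.dist_eq,
    EuclideanSpace.dist_eq]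
  congr 1
  refine Finset.sum_congr rfl fun i _ => ?_
  simp [Real.dist_eq, ← mul_sub, abs_mul, hε]

variable [DecidableEq ι]

lemma signedPerm_single (π : Equiv.Perm ι) (ε : ι → ℝ) (i : ι) (a : ℝ) :
    signedPerm π ε (single i a) = single (π i) (ε i * a) := by
  have : WithLp.toLp 2 (fun k => ε k * single i a k) = single i (ε i * a) := by
    ext k
    by_cases hk : k = i <;> simp [PiLp.single_apply, hk]
  rw [signedPerm, this, piLpCongrLeft_single]

lemma EuclideanSpace.inner_single_single (i j : ι) (a b : ℝ) :
    inner ℝ (single i a) (single j b) = if i = j then a * b else 0 := by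
  rw [inner_single_left, PiLp.single_apply]
  split_ifs <;> simp_all

end SignedPerm

section Orthoplex

variable {n : ℕ}

lemma mem_orthoplexVertices {x : EuclideanSpace ℝ (Fin n)} :
    x ∈ orthoplexVertices n ↔ ∃ i a, |a| = 1 ∧ x = single i a := by
  simp only [orthoplexVertices, mem_ofPred_eq, abs_eq zero_le_one]
  constructor
  · rintro ⟨i, rfl | rfl⟩
    · exact ⟨i, 1, by simp⟩
    · exact ⟨i, -1, by simp [PiLp.single_neg]⟩
  · rintro ⟨i, a, rfl | rfl, rfl⟩
    · exact ⟨i, by simp⟩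
    · exact ⟨i, by simp [PiLp.single_neg]⟩

lemma single_mem_orthoplexVertices {i : Fin n} {a : ℝ} :
    single i a ∈ orthoplexVertices n ↔ |a| = 1 := by
  refine ⟨fun h => ?_, fun h => mem_orthoplexVertices.2 ⟨i, a, h, rfl⟩⟩
  obtain ⟨j, b, hb, hab⟩ := mem_orthoplexVertices.1 h
  have : ‖single i a‖ = ‖single j b‖ := by rw [hab]
  simpa [hb] using this

lemma norm_of_mem_orthoplexVertices {x : EuclideanSpace ℝ (Fin n)}
    (hx : x ∈ orthoplexVertices n) : ‖x‖ = 1 := by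
  obtain ⟨i, a, ha, rfl⟩ := mem_orthoplexVertices.1 hx
  simpa using ha

lemma bijOn_signedPerm (π : Equiv.Perm (Fin n)) {ε : Fin n → ℝ} (hε : ∀ i, |ε i| = 1) :
    BijOn (signedPerm π ε) (orthoplexVertices n) (orthoplexVertices n) := by
  refine ⟨fun x hx => ?_, (isometry_signedPerm π hε).injective.injOn, fun y hy => ?_⟩
  · obtain ⟨i, a, ha, rfl⟩ := mem_orthoplexVertices.1 hx
    rw [signedPerm_single, single_mem_orthoplexVertices, abs_mul, hε, ha, one_mul]
  · obtain ⟨k, b, hb, rfl⟩ := mem_orthoplexVertices.1 hy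
    set i := π.symm k
    refine ⟨single i (ε i * b), ?_, ?_⟩
    · rw [single_mem_orthoplexVertices, abs_mul, hε, hb, one_mul]
    · rw [signedPerm_single, ← mul_assoc, ← abs_mul_abs_self, hε, one_mul, one_mul,
        Equiv.apply_symm_apply]

variable {S : Set (EuclideanSpace ℝ (Fin n))}
  {f : EuclideanSpace ℝ (Fin n) → EuclideanSpace ℝ (Fin n)}
  (hS : S ⊆ orthoplexVertices n) (hfS : MapsTo f S (orthoplexVertices n))
  (hpres : ∀ x ∈ S, ∀ y ∈ S, dist (f x) (f y) = dist x y)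
include hS hfS hpres

lemma inner_map_map_of_mem {x y : EuclideanSpace ℝ (Fin n)} (hx : x ∈ S) (hy : y ∈ S) :
    inner ℝ (f x) (f y) = inner ℝ x y := by
  refine inner_eq_inner_of_dist_eq ?_ ?_ (hpres x hx y hy) <;>
    simp only [norm_of_mem_orthoplexVertices, hS hx, hS hy, hfS hx, hfS hy]

lemma exists_forall_map_single_eq (i : Fin n) : ∃ j e, |e| = 1 ∧
    ∀ a, single i a ∈ S → f (single i a) = single j (e * a) := by
  by_cases hi : ∃ a₀, single i a₀ ∈ S
  swap
  · exact ⟨i, 1, abs_one, fun a ha => (hi ⟨a, ha⟩).elim⟩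
  obtain ⟨a₀, ha₀S⟩ := hi
  obtain ⟨j, c, hc, hfa₀⟩ := mem_orthoplexVertices.1 (hfS ha₀S)
  refine ⟨j, c * a₀, by rw [abs_mul, hc, single_mem_orthoplexVertices.1 (hS ha₀S), one_mul],
    fun a haS => ?_⟩
  obtain ⟨j', c', -, hfa⟩ := mem_orthoplexVertices.1 (hfS haS)
  have key := inner_map_map_of_mem hS hfS hpres ha₀S haS
  rw [hfa₀, hfa, inner_single_single, inner_single_single, if_pos rfl] at key
  have hprod : a₀ * a ≠ 0 := by
    rw [← abs_ne_zero, abs_mul, single_mem_orthoplexVertices.1 (hS ha₀S),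
      single_mem_orthoplexVertices.1 (hS haS)]
    norm_num
  obtain rfl : j = j' := by_contra fun hj => hprod (by rw [← key, if_neg hj])
  rw [if_pos rfl] at key
  have hcc : c * c = 1 := by rw [← abs_mul_abs_self, hc, one_mul]
  rw [hfa, mul_assoc, ← key, ← mul_assoc, hcc, one_mul]

lemma exists_signedPerm_eqOn : ∃ (π : Equiv.Perm (Fin n)) (ε : Fin n → ℝ),
    (∀ i, |ε i| = 1) ∧ EqOn (signedPerm π ε) f S := by
  choose σ ε hε hσε using exists_forall_map_single_eq hS hfS hpres
  have hσ : InjOn σ {i | ∃ a, single i a ∈ S} := by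
    rintro i ⟨a, haS⟩ i' ⟨a', ha'S⟩ hii'
    have key := inner_map_map_of_mem hS hfS hpres haS ha'S
    rw [hσε i a haS, hσε i' a' ha'S, hii', inner_single_single, inner_single_single,
      if_pos rfl] at key
    by_contra hne
    rw [if_neg hne] at key
    simpa [abs_mul, hε, single_mem_orthoplexVertices.1 (hS haS),
      single_mem_orthoplexVertices.1 (hS ha'S)] using congrArg abs key
  obtain ⟨π, hπ⟩ := Equiv.Perm.exists_extending_pair _ _ Subtype.val_injective hσ.injective
  refine ⟨π, ε, hε, fun x hx => ?_⟩
  obtain ⟨i, a, -, rfl⟩ := mem_orthoplexVertices.1 (hS hx)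
  rw [signedPerm_single, hσε i a hx, hπ ⟨i, a, hx⟩]
  rfl

end Orthoplex

theorem stmt12_general (n : ℕ) (S : Set (EuclideanSpace ℝ (Fin n)))
    (hS : S ⊆ orthoplexVertices n)
    (f : EuclideanSpace ℝ (Fin n) → EuclideanSpace ℝ (Fin n))
    (hfS : f '' S ⊆ orthoplexVertices n)
    (hpres : ∀ x ∈ S, ∀ y ∈ S, dist (f x) (f y) = dist x y) :
    ∃ g : EuclideanSpace ℝ (Fin n) → EuclideanSpace ℝ (Fin n),
      Set.BijOn g (orthoplexVertices n) (orthoplexVertices n) ∧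
      (∀ x ∈ orthoplexVertices n, ∀ y ∈ orthoplexVertices n,
        dist (g x) (g y) = dist x y) ∧
      ∀ x ∈ S, g x = f x := by
  obtain ⟨π, ε, hε, hf⟩ := exists_signedPerm_eqOn hS (mapsTo_iff_image_subset.2 hfS) hpres
  exact ⟨signedPerm π ε, bijOn_signedPerm π hε,
    fun x _ y _ => (isometry_signedPerm π hε).dist_eq x y, hf⟩

/-- The vertex set of the `n`-orthoplex is `2n`-point homogeneous: any
distance-preserving injection between subsets of the vertex set extends to a
self-isometry of the whole vertex set. -/
theorem stmt12 (n : ℕ) (S : Set (EuclideanSpace ℝ (Fin n)))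
    (hS : S ⊆ orthoplexVertices n)
    (f : EuclideanSpace ℝ (Fin n) → EuclideanSpace ℝ (Fin n))
    (hfS : f '' S ⊆ orthoplexVertices n) (hinj : Set.InjOn f S)
    (hpres : ∀ x ∈ S, ∀ y ∈ S, dist (f x) (f y) = dist x y) :
    ∃ g : EuclideanSpace ℝ (Fin n) → EuclideanSpace ℝ (Fin n),
      Set.BijOn g (orthoplexVertices n) (orthoplexVertices n) ∧
      (∀ x ∈ orthoplexVertices n, ∀ y ∈ orthoplexVertices n,
        dist (g x) (g y) = dist x y) ∧
      ∀ x ∈ S, g x = f x :=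
  stmt12_general n S hS f hfS hpres
end

section
/- For n ≥ 4, the vertex set of the standard n-demihypercube DC_n — the set of points (±1,...,±1) ∈ ℝ^n with an even number of minus signs — is 3-point homogeneous under the group of signed coordinate permutations preserving DC_n (all coordinate permutations and sign changes of an even number of coordinates). -/
/-!
For `±1`-vectors the Euclidean distances of a triple `x₀, x₁, x₂` determine its Gram matrix,
since every such vector has squared norm `n`. Writing `uᵢ = x₀ᵢ x₁ᵢ` and `vᵢ = x₀ᵢ x₂ᵢ`, the number
of coordinates with `(uᵢ, vᵢ) = (a, b)` is `¼ ∑ᵢ (1 + a uᵢ)(1 + b vᵢ)`, an affine function of the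
Gram matrix. So two triples at the same mutual distances have the same pattern counts, and a
coordinate permutation `σ` matches their patterns. The signs `εᵢ = y₀ᵢ x₀(σ⁻¹ i)` then carry the
permuted first triple onto the second; their product is `∏ y₀ · ∏ x₀ = 1`, so on the demicube an
even number of them are `-1`.
-/

/-- The vertex set of the standard `n`-demihypercube: points of `{−1,1}ⁿ` with
an even number of `−1` coordinates. -/
def demicubeVertices (n : ℕ) : Set (EuclideanSpace ℝ (Fin n)) :=
  {x | (∀ i, x i = 1 ∨ x i = -1) ∧
    Even (Finset.univ.filter (fun i => x i = -1)).card}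

open Finset
open scoped InnerProductSpace

lemma real_inner_eq_of_dist_eq {E : Type*} [NormedAddCommGroup E] [InnerProductSpace ℝ E]
    {x y x' y' : E} (hx : ‖x‖ ^ 2 = ‖x'‖ ^ 2) (hy : ‖y‖ ^ 2 = ‖y'‖ ^ 2)
    (h : dist x y = dist x' y') : ⟪x, y⟫_ℝ = ⟪x', y'⟫_ℝ := by
  have hxy := norm_sub_sq_real x y
  have hxy' := norm_sub_sq_real x' y'
  rw [← dist_eq_norm, h, dist_eq_norm, hxy', hx, hy] at hxy
  linarith

lemma Equiv.Perm.exists_apply_eq_of_card_fiber_eq {ι γ : Type*} [Fintype ι] [DecidableEq γ]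
    {f g : ι → γ} (h : ∀ c, #{i | f i = c} = #{i | g i = c}) :
    ∃ σ : Equiv.Perm ι, ∀ i, g (σ i) = f i :=
  ⟨Equiv.ofFiberEquiv fun c =>
      Fintype.equivOfCardEq <| by simpa only [Fintype.card_subtype] using h c,
    Equiv.ofFiberEquiv_map _⟩

lemma mul_self_eq_one_of_sign {u : ℝ} (hu : u = 1 ∨ u = -1) : u * u = 1 := by
  rcases hu with rfl | rfl <;> norm_num

lemma mul_sign_of_sign {u v : ℝ} (hu : u = 1 ∨ u = -1) (hv : v = 1 ∨ v = -1) :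
    u * v = 1 ∨ u * v = -1 := by
  rcases hu with rfl | rfl <;> rcases hv with rfl | rfl <;> norm_num

lemma ite_eq_mul_of_sign {u v a b : ℝ} (hu : u = 1 ∨ u = -1) (hv : v = 1 ∨ v = -1)
    (ha : a = 1 ∨ a = -1) (hb : b = 1 ∨ b = -1) :
    (if (u, v) = (a, b) then (4 : ℝ) else 0) = (1 + a * u) * (1 + b * v) := by
  rcases hu with rfl | rfl <;> rcases hv with rfl | rfl <;> rcases ha with rfl | rfl <;>
    rcases hb with rfl | rfl <;> norm_num

section SignVectors

variable {ι : Type*}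

def signPattern (x : Fin 3 → EuclideanSpace ℝ ι) (i : ι) : ℝ × ℝ :=
  (x 0 i * x 1 i, x 0 i * x 2 i)

lemma mul_mul_eq_of_signPattern_eq {x y : Fin 3 → EuclideanSpace ℝ ι} {i j : ι}
    (hx : ∀ k, x k j = 1 ∨ x k j = -1) (hy : ∀ k, y k i = 1 ∨ y k i = -1)
    (h : signPattern x j = signPattern y i) (k : Fin 3) :
    y 0 i * x 0 j * x k j = y k i := by
  rw [signPattern, signPattern, Prod.mk.injEq] at h
  match k with
  | 0 => linear_combination y 0 i * mul_self_eq_one_of_sign (hx 0)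
  | 1 => linear_combination y 0 i * h.1 + y 1 i * mul_self_eq_one_of_sign (hy 0)
  | 2 => linear_combination y 0 i * h.2 + y 2 i * mul_self_eq_one_of_sign (hy 0)

variable [Fintype ι]

lemma prod_eq_neg_one_pow_card_of_sign {x : ι → ℝ} (hx : ∀ i, x i = 1 ∨ x i = -1) :
    ∏ i, x i = (-1) ^ #{i | x i = -1} := by
  rw [← prod_filter_mul_prod_filter_not univ (fun i => x i = -1),
    prod_congr rfl fun i hi => (mem_filter.1 hi).2, prod_const,
    prod_eq_one fun i hi => (hx i).resolve_right (mem_filter.1 hi).2, mul_one]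

lemma even_card_neg_one_iff_prod_eq_one {x : ι → ℝ} (hx : ∀ i, x i = 1 ∨ x i = -1) :
    Even #{i | x i = -1} ↔ ∏ i, x i = 1 := by
  rw [prod_eq_neg_one_pow_card_of_sign hx, neg_one_pow_eq_one_iff_even (by norm_num)]

lemma EuclideanSpace.norm_sq_eq_card_of_sign {x : EuclideanSpace ℝ ι}
    (hx : ∀ i, x i = 1 ∨ x i = -1) : ‖x‖ ^ 2 = Fintype.card ι := by
  rw [EuclideanSpace.real_norm_sq_eq,
    sum_congr rfl fun i _ => (sq (x i)).trans (mul_self_eq_one_of_sign (hx i)),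
    sum_const, card_univ, nsmul_one]

lemma four_mul_card_signPattern_eq {x : Fin 3 → EuclideanSpace ℝ ι}
    (hx : ∀ k i, x k i = 1 ∨ x k i = -1) {a b : ℝ}
    (ha : a = 1 ∨ a = -1) (hb : b = 1 ∨ b = -1) :
    4 * (#{i | signPattern x i = (a, b)} : ℝ) =
      Fintype.card ι + a * ⟪x 0, x 1⟫_ℝ + b * ⟪x 0, x 2⟫_ℝ + a * b * ⟪x 1, x 2⟫_ℝ := by
  have hpattern i := ite_eq_mul_of_sign (mul_sign_of_sign (hx 0 i) (hx 1 i))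
    (mul_sign_of_sign (hx 0 i) (hx 2 i)) ha hb
  calc 4 * (#{i | signPattern x i = (a, b)} : ℝ)
      = ∑ i, (if signPattern x i = (a, b) then 4 else 0) := by
        rw [natCast_card_filter, mul_sum]
        simp only [mul_ite, mul_one, mul_zero]
    _ = ∑ i, (1 + a * (x 0 i * x 1 i) + b * (x 0 i * x 2 i) + a * b * (x 1 i * x 2 i)) := by
        refine sum_congr rfl fun i _ => ?_
        rw [signPattern, hpattern]
        linear_combination (a * b * x 1 i * x 2 i) * mul_self_eq_one_of_sign (hx 0 i)
    _ = Fintype.card ι + a * ⟪x 0, x 1⟫_ℝ + b * ⟪x 0, x 2⟫_ℝ + a * b * ⟪x 1, x 2⟫_ℝ := by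
        simp [PiLp.inner_apply, sum_add_distrib, mul_sum, mul_comm]

lemma card_signPattern_eq_of_inner_eq {x y : Fin 3 → EuclideanSpace ℝ ι}
    (hx : ∀ k i, x k i = 1 ∨ x k i = -1) (hy : ∀ k i, y k i = 1 ∨ y k i = -1)
    (h : ∀ k l, ⟪x k, x l⟫_ℝ = ⟪y k, y l⟫_ℝ) (p : ℝ × ℝ) :
    #{i | signPattern x i = p} = #{i | signPattern y i = p} := by
  obtain ⟨a, b⟩ := p
  by_cases hab : (a = 1 ∨ a = -1) ∧ (b = 1 ∨ b = -1)
  · have hcount := four_mul_card_signPattern_eq hx hab.1 hab.2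
    rw [h 0 1, h 0 2, h 1 2, ← four_mul_card_signPattern_eq hy hab.1 hab.2] at hcount
    exact_mod_cast mul_left_cancel₀ four_ne_zero hcount
  · have hempty (z : Fin 3 → EuclideanSpace ℝ ι) (hz : ∀ k i, z k i = 1 ∨ z k i = -1) :
        #{i | signPattern z i = (a, b)} = 0 := by
      refine card_eq_zero.2 (filter_eq_empty_iff.2 fun i _ hi => hab ?_)
      rw [signPattern, Prod.mk.injEq] at hi
      exact hi.1 ▸ hi.2 ▸ ⟨mul_sign_of_sign (hz 0 i) (hz 1 i), mul_sign_of_sign (hz 0 i) (hz 2 i)⟩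
    rw [hempty x hx, hempty y hy]

lemma even_card_mul_comp_perm_eq_neg_one {x y : ι → ℝ} (hx : ∀ i, x i = 1 ∨ x i = -1)
    (hy : ∀ i, y i = 1 ∨ y i = -1) (hxe : Even #{i | x i = -1}) (hye : Even #{i | y i = -1})
    (σ : Equiv.Perm ι) : Even #{i | y i * x (σ.symm i) = -1} := by
  rw [even_card_neg_one_iff_prod_eq_one fun i => mul_sign_of_sign (hy i) (hx _),
    prod_mul_distrib, Equiv.prod_comp σ.symm x, (even_card_neg_one_iff_prod_eq_one hx).1 hxe,
    (even_card_neg_one_iff_prod_eq_one hy).1 hye, one_mul]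

end SignVectors

theorem stmt13_general (n : ℕ)
    (A B : Fin 3 → EuclideanSpace ℝ (Fin n))
    (hA : ∀ k, A k ∈ demicubeVertices n) (hB : ∀ k, B k ∈ demicubeVertices n)
    (hd : ∀ k l, dist (A k) (A l) = dist (B k) (B l)) :
    ∃ (σ : Equiv.Perm (Fin n)) (ε : Fin n → ℝ),
      (∀ i, ε i = 1 ∨ ε i = -1) ∧
      Even (Finset.univ.filter (fun i => ε i = -1)).card ∧
      ∀ k, (WithLp.toLp 2 (fun i => ε i * A k (σ.symm i)) : EuclideanSpace ℝ (Fin n)) = B k := by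
  have hAsign k : ∀ i, A k i = 1 ∨ A k i = -1 := (hA k).1
  have hBsign k : ∀ i, B k i = 1 ∨ B k i = -1 := (hB k).1
  have hnorm k l : ‖A k‖ ^ 2 = ‖B l‖ ^ 2 := by
    rw [EuclideanSpace.norm_sq_eq_card_of_sign (hAsign k),
      EuclideanSpace.norm_sq_eq_card_of_sign (hBsign l)]
  have hgram k l : ⟪A k, A l⟫_ℝ = ⟪B k, B l⟫_ℝ :=
    real_inner_eq_of_dist_eq (hnorm k k) (hnorm l l) (hd k l)
  obtain ⟨σ, hσ⟩ := Equiv.Perm.exists_apply_eq_of_card_fiber_eq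
    (card_signPattern_eq_of_inner_eq hAsign hBsign hgram)
  refine ⟨σ, fun i => B 0 i * A 0 (σ.symm i), fun i => mul_sign_of_sign (hBsign 0 i) (hAsign 0 _),
    even_card_mul_comp_perm_eq_neg_one (hAsign 0) (hBsign 0) (hA 0).2 (hB 0).2 σ,
    fun k => ?_⟩
  ext i
  refine mul_mul_eq_of_signPattern_eq (fun k => hAsign k _) (fun k => hBsign k i) ?_ k
  rw [← hσ, Equiv.apply_symm_apply]

/-- For `n ≥ 4`, the vertex set of the `n`-demihypercube is 3-point
homogeneous under the group of signed coordinate permutations preserving it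
(coordinate permutations composed with sign changes of an even number of
coordinates). -/
theorem stmt13 (n : ℕ) (hn : 4 ≤ n)
    (A B : Fin 3 → EuclideanSpace ℝ (Fin n))
    (hA : ∀ k, A k ∈ demicubeVertices n) (hB : ∀ k, B k ∈ demicubeVertices n)
    (hd : ∀ k l, dist (A k) (A l) = dist (B k) (B l)) :
    ∃ (σ : Equiv.Perm (Fin n)) (ε : Fin n → ℝ),
      (∀ i, ε i = 1 ∨ ε i = -1) ∧
      Even (Finset.univ.filter (fun i => ε i = -1)).card ∧
      ∀ k, (WithLp.toLp 2 (fun i => ε i * A k (σ.symm i)) : EuclideanSpace ℝ (Fin n)) = B k :=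
  stmt13_general n A B hA hB hd
end

section
/- Let (M,d) be a finite homogeneous metric space such that for some point x ∈ M the distances from x to all other points of M are pairwise distinct. Then (M,d) is k-point homogeneous for every k ≥ 1. -/
/-- A metric space is `k`-point homogeneous if any two `k`-tuples with equal
corresponding pairwise distances are exchanged by a self-isometry. -/
def IsPointHomogeneous (M : Type*) [MetricSpace M] (k : ℕ) : Prop :=
  ∀ A B : Fin k → M, (∀ i j, dist (A i) (A j) = dist (B i) (B j)) →
    ∃ f : M ≃ᵢ M, ∀ i, f (A i) = B i

/-- A finite homogeneous metric space in which the distances from some point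
to all other points are pairwise distinct is `k`-point homogeneous for every
`k ≥ 1`. -/
theorem stmt18 (M : Type*) [MetricSpace M] [Fintype M]
    (hom : ∀ x y : M, ∃ f : M ≃ᵢ M, f x = y)
    (x : M) (hx : ∀ y z : M, y ≠ x → z ≠ x → y ≠ z → dist x y ≠ dist x z) :
    ∀ k : ℕ, 1 ≤ k → IsPointHomogeneous M k := by
  -- distances from x are injective
  have hxinj : ∀ y z : M, dist x y = dist x z → y = z := by
    intro y z h
    by_contra hne
    rcases eq_or_ne y x with rfl | hy
    · simp at h
      exact hne h
    rcases eq_or_ne z x with rfl | hz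
    · simp at h
      exact hne h.symm
    exact hx y z hy hz hne h
  -- distances from any point are injective
  have hinj : ∀ p y z : M, dist p y = dist p z → y = z := by
    intro p y z h
    obtain ⟨f, hf⟩ := hom x p
    have h' : dist x (f.symm y) = dist x (f.symm z) := by
      have hy : dist x (f.symm y) = dist p y := by
        rw [← hf, ← f.dist_eq x (f.symm y), f.apply_symm_apply]
      have hz : dist x (f.symm z) = dist p z := by
        rw [← hf, ← f.dist_eq x (f.symm z), f.apply_symm_apply]
      rw [hy, hz, h]
    have := hxinj _ _ h'
    exact f.symm.injective this
  intro k hk A B hAB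
  obtain ⟨f, hf⟩ := hom (A ⟨0, hk⟩) (B ⟨0, hk⟩)
  refine ⟨f, fun i => ?_⟩
  apply hinj (B ⟨0, hk⟩)
  have h1 : dist (B ⟨0, hk⟩) (f (A i)) = dist (A ⟨0, hk⟩) (A i) := by
    rw [← hf, f.dist_eq]
  rw [h1, hAB]
end
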